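/- arXiv:1807.08297 — 4 statements merged into one kernel-verified Lean document; each statement's English description precedes it below -/
import Mathlib

section
/- Let n ≥ 2 and a, c > 0 satisfy 1 + cosh a - 2 cosh c - 2(cosh c - 1)cos(π/n) < 0. Define r² = (cosh a - 1)/((1 + cosh a + 2cosh c - 2(1 + cosh c)cos(π/n)) cos²(π/(2n))) and h² = -4(1 + cosh a - 2cosh c - 2(cosh c - 1)cos(π/n)) tan²(π/(2n)) / (1 + cosh a + 2cosh c - 2(1 + cosh c)cos(π/n)). Then r² > 0, h² > 0, and r² + h²/4 < 1. -/
open Real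

/-- The parameters of the Cayley–Klein realization of a compact hyperbolic
antiprism are positive and place all vertices strictly inside the unit ball. -/
theorem stmt_11 (n : ℕ) (hn : 2 ≤ n) (a c : ℝ) (ha : 0 < a) (hc : 0 < c)
    (hex : 1 + Real.cosh a - 2 * Real.cosh c
      - 2 * (Real.cosh c - 1) * Real.cos (π / n) < 0)
    (r2 h2 : ℝ)
    (hr2 : r2 = (Real.cosh a - 1) /
      ((1 + Real.cosh a + 2 * Real.cosh c - 2 * (1 + Real.cosh c) * Real.cos (π / n))
        * Real.cos (π / (2 * n)) ^ 2))
    (hh2 : h2 = -(4 * (1 + Real.cosh a - 2 * Real.cosh c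
        - 2 * (Real.cosh c - 1) * Real.cos (π / n)) * Real.tan (π / (2 * n)) ^ 2) /
      (1 + Real.cosh a + 2 * Real.cosh c - 2 * (1 + Real.cosh c) * Real.cos (π / n))) :
    0 < r2 ∧ 0 < h2 ∧ r2 + h2 / 4 < 1 := by
  have hn0 : (0:ℝ) < (n:ℝ) := by positivity
  have hA : 1 < Real.cosh a := Real.one_lt_cosh.2 ha.ne'
  have hC : 1 < Real.cosh c := Real.one_lt_cosh.2 hc.ne'
  have hθ0 : 0 < π / (2 * n) := by positivity
  have hθ2 : π / (2 * n) < π / 2 := by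
    apply div_lt_div_of_pos_left Real.pi_pos (by norm_num)
    have : (2:ℝ) ≤ (n:ℝ) := by exact_mod_cast hn
    linarith
  have hs0 : 0 < Real.cos (π / (2 * n)) :=
    Real.cos_pos_of_mem_Ioo ⟨by linarith [Real.pi_pos], hθ2⟩
  have hsin : 0 < Real.sin (π / (2 * n)) :=
    Real.sin_pos_of_pos_of_lt_pi hθ0 (by linarith [Real.pi_pos])
  set s := Real.cos (π / (2 * n)) with hs
  have hss1 : s ^ 2 < 1 := by
    have := Real.sin_sq_add_cos_sq (π / (2 * n))
    nlinarith
  have hss0 : 0 < s ^ 2 := by positivity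
  have hcos : Real.cos (π / n) = 2 * s ^ 2 - 1 := by
    have h2x : π / n = 2 * (π / (2 * n)) := by
      field_simp
    rw [h2x, Real.cos_two_mul]
  have htan : Real.tan (π / (2 * n)) ^ 2 = (1 - s ^ 2) / s ^ 2 := by
    rw [Real.tan_eq_sin_div_cos, div_pow, Real.sin_sq]
  set A := Real.cosh a
  set C := Real.cosh c
  set N := 1 + A - 2 * C - 2 * (C - 1) * Real.cos (π / n) with hN
  set D := 1 + A + 2 * C - 2 * (1 + C) * Real.cos (π / n) with hDdef
  have hD : 0 < D := by
    rw [hDdef, hcos]; nlinarith [mul_pos (by linarith : (0:ℝ) < 1 + C) (by linarith : 0 < 1 - s^2)]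
  clear_value s A C N D
  refine ⟨?_, ?_, ?_⟩
  · rw [hr2]
    exact div_pos (by linarith) (by positivity)
  · rw [hh2]
    apply div_pos _ hD
    have htp : 0 < Real.tan (π / (2 * n)) ^ 2 := by
      rw [htan]; exact div_pos (by linarith) hss0
    nlinarith [mul_pos (neg_pos.2 hex) htp]
  · have hsum : r2 + h2 / 4 = ((A - 1) + (-N) * (1 - s ^ 2)) / (D * s ^ 2) := by
      rw [hr2, hh2, htan]
      field_simp
    rw [hsum, div_lt_one (by positivity)]
    rw [hN, hDdef, hcos]
    nlinarith [mul_pos hss0 (by linarith : 0 < 1 - s^2)]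
end

section
/- Let n ≥ 2, r, h > 0 with r² + h²/4 < 1, and define cosh a = (4 - h² - 4r²cos(2π/n))/(4 - h² - 4r²) and cosh c = (4 + h² - 4r²cos(2π/n))/(4 - h² - 4r²). Then cosh a ≥ 1 and cosh c > 1, and moreover 1 + cosh a - 2 cosh c - 2(cosh c - 1)cos(π/n) < 0. -/
open Real

/-- Edge-length expressions of a compact hyperbolic antiprism in the
Cayley–Klein model satisfy the existence inequality. -/
theorem stmt_12 (n : ℕ) (hn : 2 ≤ n) (r h : ℝ) (hr : 0 < r) (hh : 0 < h)
    (hin : r ^ 2 + h ^ 2 / 4 < 1) (a c : ℝ)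
    (hca : Real.cosh a = (4 - h ^ 2 - 4 * r ^ 2 * Real.cos (2 * π / n))
      / (4 - h ^ 2 - 4 * r ^ 2))
    (hcc : Real.cosh c = (4 + h ^ 2 - 4 * r ^ 2 * Real.cos (2 * π / n))
      / (4 - h ^ 2 - 4 * r ^ 2)) :
    1 ≤ Real.cosh a ∧ 1 < Real.cosh c ∧
    1 + Real.cosh a - 2 * Real.cosh c
      - 2 * (Real.cosh c - 1) * Real.cos (π / n) < 0 := by
  have hn' : (2:ℝ) ≤ n := by exact_mod_cast hn
  have hD : 0 < 4 - h ^ 2 - 4 * r ^ 2 := by nlinarith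
  have hcos2 : Real.cos (2 * π / n) ≤ 1 := Real.cos_le_one _
  have ha1 : 1 ≤ Real.cosh a := by
    rw [hca, le_div_iff₀ hD]; nlinarith
  have hac : Real.cosh a < Real.cosh c := by
    rw [hca, hcc, div_lt_div_iff₀ hD hD]; nlinarith [mul_pos (mul_pos hh hh) hD]
  have hc1 : 1 < Real.cosh c := lt_of_le_of_lt ha1 hac
  have hpi := Real.pi_pos
  have hcosn : 0 ≤ Real.cos (π / n) := by
    apply Real.cos_nonneg_of_mem_Icc
    constructor
    · have : 0 ≤ π / n := by positivity
      linarith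
    · rw [div_le_div_iff₀ (by linarith) (by norm_num)]
      nlinarith
  have hprod : 0 ≤ 2 * (Real.cosh c - 1) * Real.cos (π / n) := by
    have := mul_nonneg (sub_nonneg.2 hc1.le) hcosn
    nlinarith
  exact ⟨ha1, hc1, by linarith⟩
end

section
/- Let n ≥ 2 and a, c > 0 with 1 + cosh a - 2 cosh c - 2(cosh c - 1)cos(π/n) < 0. Then the quantity R = 1 - cosh a(2 + cosh a) + 2cosh²c + 4(cosh a - 1)cosh c·cos(π/n) - 2 sinh²c·cos(2π/n) is strictly positive, and 2cosh²c - 1 - cosh a > 0. -/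
open Real

/-- Positivity of the radicand `R` and of the denominator `2cosh²c - 1 - cosh a`
in the dihedral-angle formulas of a compact hyperbolic antiprism. -/
theorem stmt_16 (n : ℕ) (hn : 2 ≤ n) (a c : ℝ) (ha : 0 < a) (hc : 0 < c)
    (hex : 1 + Real.cosh a - 2 * Real.cosh c
      - 2 * (Real.cosh c - 1) * Real.cos (π / n) < 0) :
    0 < 1 - Real.cosh a * (2 + Real.cosh a) + 2 * Real.cosh c ^ 2
        + 4 * (Real.cosh a - 1) * Real.cosh c * Real.cos (π / n)
        - 2 * Real.sinh c ^ 2 * Real.cos (2 * π / n) ∧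
    2 * Real.cosh c ^ 2 - 1 - Real.cosh a > 0 := by
  set A := Real.cosh a with hA
  set C := Real.cosh c with hC
  set t := Real.cos (π / n) with ht
  have hA1 : 1 < A := by
    rw [hA]; exact Real.one_lt_cosh.mpr ha.ne'
  have hC1 : 1 < C := by
    rw [hC]; exact Real.one_lt_cosh.mpr hc.ne'
  have ht1 : t ≤ 1 := Real.cos_le_one _
  have hcos2 : Real.cos (2 * π / n) = 2 * t ^ 2 - 1 := by
    rw [ht, show (2 * π / n : ℝ) = 2 * (π / n) by ring, Real.cos_two_mul]
  have hsinh : Real.sinh c ^ 2 = C ^ 2 - 1 := by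
    rw [hC]; nlinarith [Real.cosh_sq_sub_sinh_sq c]
  have hD : 0 < 2 * (C - 1) * t + 2 * C - 1 - A := by linarith
  have hE : 0 < 2 * C + 1 + A - 2 * (C + 1) * t := by
    nlinarith [mul_nonneg (by linarith : (0:ℝ) ≤ C + 1) (by linarith : (0:ℝ) ≤ 1 - t)]
  constructor
  · rw [hcos2, hsinh]
    nlinarith [mul_pos hD hE]
  · nlinarith [mul_nonneg (by linarith : (0:ℝ) ≤ 2*(C-1)) (by linarith : (0:ℝ) ≤ 1 - t),
      sq_nonneg (C - 1)]
end

section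
/- Let n ≥ 2 and a > 0 be fixed, and define for t in the domain D = {t > 0 : 1 + cosh a - 2cosh t - 2(cosh t - 1)cos(π/n) < 0} the functions A(t) = arccos(-√(cosh a - 1)(1 + cosh a - 2cosh t·cos(π/n)) / √(2(2cosh²t - 1 - cosh a)(cosh a - cos(2π/n)))) and C(t) = arccos((cosh t - cosh a·cosh t + 2(cosh²t - 1)cos(π/n))/(1 + cosh a - 2cosh²t)). Then on D, A and C are differentiable with dA/dt = 2(cosh t - cos(π/n)) sinh a·sinh t / ((1 + cosh a - 2cosh²t)√R) and dC/dt = -(cosh a - 1)(1 + cosh a + 2cosh²t - 4cosh t·cos(π/n)) / ((1 + cosh a - 2cosh²t)√R), where R = 1 - cosh a(2 + cosh a) + 2cosh²t + 4(cosh a - 1)cosh t·cos(π/n) - 2sinh²t·cos(2π/n). -/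
open Real

/-!
Both angles are `arccos ∘ u` for an explicit function `u` of `cosh s`, so their derivative is
`-u' / √(1 - u²)`. The whole computation rests on `1 - u(t)²` being a square times `R`:
`1 - u² = sinh² t · R / (2 cosh² t - 1 - cosh a)²` for `C`, and
`1 - u² = (cosh a + 1) · R / (2 (2 cosh² t - 1 - cosh a)(cosh a - cos (2π/n)))` for `A`.
Positivity of `R` on `D` comes from the factorisation
`R = (2 cosh t + 1 + cosh a - 2 (cosh t + 1) cos (π/n))
  · (2 cosh t - 1 - cosh a + 2 (cosh t - 1) cos (π/n))`,
whose first factor is at least `cosh a - 1` and whose second factor is positive exactly on `D`.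
-/

-- `p` and `q` stand for `cos (π / n)` and `cos (2π / n)`.
noncomputable def antiprismRadicand (a t p q : ℝ) : ℝ :=
  1 - cosh a * (2 + cosh a) + 2 * cosh t ^ 2 + 4 * (cosh a - 1) * cosh t * p
    - 2 * sinh t ^ 2 * q

noncomputable def antiprismAngleA (a p q s : ℝ) : ℝ :=
  arccos (-(√(cosh a - 1) * (1 + cosh a - 2 * cosh s * p))
    / √(2 * (2 * cosh s ^ 2 - 1 - cosh a) * (cosh a - q)))

noncomputable def antiprismAngleC (a p s : ℝ) : ℝ :=
  arccos ((cosh s - cosh a * cosh s + 2 * (cosh s ^ 2 - 1) * p) / (1 + cosh a - 2 * cosh s ^ 2))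

theorem HasDerivAt.arccos_of_one_sub_sq_eq {f : ℝ → ℝ} {f' S t : ℝ} (hf : HasDerivAt f f' t)
    (hS : 0 < S) (h : 1 - f t ^ 2 = S ^ 2) :
    HasDerivAt (fun s => arccos (f s)) (-f' / S) t := by
  have hsq : f t ^ 2 < 1 := by nlinarith [pow_pos hS 2]
  obtain ⟨h₁, h₂⟩ := abs_lt.mp <| (sq_lt_one_iff_abs_lt_one _).mp hsq
  have hd := (hasDerivAt_arccos h₁.ne' h₂.ne).comp t hf
  rw [h, sqrt_sq hS.le] at hd
  exact hd.congr_deriv (by ring)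

section
variable {a t p q : ℝ}

theorem antiprismRadicand_eq_mul (hq : q = 2 * p ^ 2 - 1) :
    antiprismRadicand a t p q = (2 * cosh t + 1 + cosh a - 2 * (cosh t + 1) * p)
      * (2 * cosh t - 1 - cosh a + 2 * (cosh t - 1) * p) := by
  rw [antiprismRadicand, hq, sinh_sq]
  ring

theorem sub_sq_eq_mul_antiprismRadicand (hq : q = 2 * p ^ 2 - 1) :
    2 * (2 * cosh t ^ 2 - 1 - cosh a) * (cosh a - q)
      - (cosh a - 1) * (1 + cosh a - 2 * cosh t * p) ^ 2
      = (cosh a + 1) * antiprismRadicand a t p q := by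
  rw [antiprismRadicand, hq, sinh_sq]
  ring

theorem antiprismRadicand_pos (ha : a ≠ 0) (hp : p ≤ 1) (hq : q = 2 * p ^ 2 - 1)
    (hdom : 1 + cosh a - 2 * cosh t - 2 * (cosh t - 1) * p < 0) :
    0 < antiprismRadicand a t p q := by
  have hK : 1 < cosh a := one_lt_cosh.mpr ha
  have hc : 1 ≤ cosh t := one_le_cosh t
  rw [antiprismRadicand_eq_mul hq]
  refine mul_pos ?_ (by linarith)
  nlinarith [mul_nonneg (by linarith : 0 ≤ cosh t + 1) (sub_nonneg.mpr hp)]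

theorem one_add_cosh_lt_two_mul_cosh_sq (hp : p ≤ 1)
    (hdom : 1 + cosh a - 2 * cosh t - 2 * (cosh t - 1) * p < 0) :
    1 + cosh a < 2 * cosh t ^ 2 := by
  have hc : 1 ≤ cosh t := one_le_cosh t
  nlinarith [mul_nonneg (sub_nonneg.mpr hc) (sub_nonneg.mpr hp), sq_nonneg (cosh t - 1)]

theorem sinh_eq_sqrt_mul_sqrt (ha : 0 ≤ a) :
    sinh a = √(cosh a - 1) * √(cosh a + 1) := by
  rw [← sqrt_mul (by linarith [one_le_cosh a]), ← sqrt_sq (sinh_nonneg_iff.mpr ha), sinh_sq]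
  ring_nf

theorem hasDerivAt_antiprismArgC (hD : 1 + cosh a - 2 * cosh t ^ 2 ≠ 0) :
    HasDerivAt (fun s => (cosh s - cosh a * cosh s + 2 * (cosh s ^ 2 - 1) * p)
        / (1 + cosh a - 2 * cosh s ^ 2))
      (-((cosh a - 1) * (1 + cosh a + 2 * cosh t ^ 2 - 4 * cosh t * p)) * sinh t
        / (1 + cosh a - 2 * cosh t ^ 2) ^ 2) t := by
  have hch := hasDerivAt_cosh t
  have hM := (hch.fun_sub (hch.const_mul (cosh a))).fun_add
    ((((hch.fun_pow 2).sub_const 1).const_mul 2).mul_const p)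
  have hD' := ((hch.fun_pow 2).const_mul 2).const_sub (1 + cosh a)
  refine (hM.fun_div hD' hD).congr_deriv ?_
  push_cast
  ring

theorem hasDerivAt_antiprismArgA (X : ℝ)
    (hG : 0 < 2 * (2 * cosh t ^ 2 - 1 - cosh a) * (cosh a - q)) :
    HasDerivAt (fun s => -(X * (1 + cosh a - 2 * cosh s * p))
        / √(2 * (2 * cosh s ^ 2 - 1 - cosh a) * (cosh a - q)))
      (2 * X * (cosh a + 1) * (cosh t - p) * sinh t
        / ((2 * cosh t ^ 2 - 1 - cosh a) * √(2 * (2 * cosh t ^ 2 - 1 - cosh a) * (cosh a - q))))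
      t := by
  set W := √(2 * (2 * cosh t ^ 2 - 1 - cosh a) * (cosh a - q)) with hW
  have hW0 : 0 < W := sqrt_pos.mpr hG
  have hW2 : W ^ 2 = 2 * (2 * cosh t ^ 2 - 1 - cosh a) * (cosh a - q) := sq_sqrt hG.le
  have hL : 2 * cosh t ^ 2 - 1 - cosh a ≠ 0 := by rintro h; simp [h] at hG
  have hch := hasDerivAt_cosh t
  have hw : HasDerivAt (fun s => √(2 * (2 * cosh s ^ 2 - 1 - cosh a) * (cosh a - q)))
      (8 * cosh t * sinh t * (cosh a - q) / (2 * W)) t := by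
    refine ((((((hch.fun_pow 2).const_mul 2).sub_const 1).sub_const (cosh a)).const_mul
      2).mul_const (cosh a - q)).congr_deriv ?_ |>.sqrt hG.ne'
    push_cast
    ring
  have hN := ((((hch.const_mul 2).mul_const p).const_sub (1 + cosh a)).const_mul X).fun_neg
  refine (hN.fun_div hw hW0.ne').congr_deriv ?_
  rw [← hW]
  field_simp
  linear_combination 4 * X * sinh t
    * (p * (2 * cosh t ^ 2 - 1 - cosh a) - (cosh a + 1) * (cosh t - p)) * hW2

theorem hasDerivAt_antiprismAngleC (ha : a ≠ 0) (ht : 0 < t) (hp : p ≤ 1)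
    (hq : q = 2 * p ^ 2 - 1) (hdom : 1 + cosh a - 2 * cosh t - 2 * (cosh t - 1) * p < 0) :
    HasDerivAt (antiprismAngleC a p)
      (-((cosh a - 1) * (1 + cosh a + 2 * cosh t ^ 2 - 4 * cosh t * p))
        / ((1 + cosh a - 2 * cosh t ^ 2) * √(antiprismRadicand a t p q))) t := by
  have hL : 0 < 2 * cosh t ^ 2 - 1 - cosh a := by
    linarith [one_add_cosh_lt_two_mul_cosh_sq hp hdom]
  have hD : 1 + cosh a - 2 * cosh t ^ 2 ≠ 0 := by linarith
  have hR := antiprismRadicand_pos ha hp hq hdom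
  have hZ : 0 < √(antiprismRadicand a t p q) := sqrt_pos.mpr hR
  have hst : 0 < sinh t := sinh_pos_iff.mpr ht
  have h1 : 1 - ((cosh t - cosh a * cosh t + 2 * (cosh t ^ 2 - 1) * p)
        / (1 + cosh a - 2 * cosh t ^ 2)) ^ 2
      = (sinh t * √(antiprismRadicand a t p q) / (2 * cosh t ^ 2 - 1 - cosh a)) ^ 2 := by
    have hsq : (1 + cosh a - 2 * cosh t ^ 2) ^ 2 = (2 * cosh t ^ 2 - 1 - cosh a) ^ 2 := by ring
    rw [div_pow, div_pow, hsq, mul_pow, sq_sqrt hR.le, sinh_sq, antiprismRadicand_eq_mul hq,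
      eq_div_iff (by positivity), sub_mul, div_mul_cancel₀ _ (by positivity)]
    ring
  refine ((hasDerivAt_antiprismArgC hD).arccos_of_one_sub_sq_eq
    (div_pos (mul_pos hst hZ) hL) h1).congr_deriv ?_
  field_simp
  ring

theorem hasDerivAt_antiprismAngleA (ha : 0 < a) (hp : |p| ≤ 1) (hq : q = 2 * p ^ 2 - 1)
    (hdom : 1 + cosh a - 2 * cosh t - 2 * (cosh t - 1) * p < 0) :
    HasDerivAt (antiprismAngleA a p q)
      (2 * (cosh t - p) * sinh a * sinh t
        / ((1 + cosh a - 2 * cosh t ^ 2) * √(antiprismRadicand a t p q))) t := by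
  obtain ⟨hp₀, hp₁⟩ := abs_le.mp hp
  have hK : 1 < cosh a := one_lt_cosh.mpr ha.ne'
  have hL : 0 < 2 * cosh t ^ 2 - 1 - cosh a := by
    linarith [one_add_cosh_lt_two_mul_cosh_sq hp₁ hdom]
  have hD : 1 + cosh a - 2 * cosh t ^ 2 ≠ 0 := by linarith
  have hKq : 0 < cosh a - q := by nlinarith
  have hG : 0 < 2 * (2 * cosh t ^ 2 - 1 - cosh a) * (cosh a - q) := by positivity
  have hR := antiprismRadicand_pos ha.ne' hp₁ hq hdom
  have hZ : 0 < √(antiprismRadicand a t p q) := sqrt_pos.mpr hR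
  rw [sinh_eq_sqrt_mul_sqrt ha.le]
  set X := √(cosh a - 1)
  set Y := √(cosh a + 1)
  set W := √(2 * (2 * cosh t ^ 2 - 1 - cosh a) * (cosh a - q)) with hW_def
  have hY2 : Y ^ 2 = cosh a + 1 := sq_sqrt (by linarith)
  have hY : 0 < Y := sqrt_pos.mpr (by linarith)
  have hW : 0 < W := sqrt_pos.mpr hG
  have h1 : 1 - (-(X * (1 + cosh a - 2 * cosh t * p)) / W) ^ 2
      = (Y * √(antiprismRadicand a t p q) / W) ^ 2 := by
    rw [div_pow, div_pow, neg_sq, mul_pow, mul_pow, sq_sqrt (by linarith), hY2,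
      sq_sqrt hR.le, sq_sqrt hG.le, ← sub_sq_eq_mul_antiprismRadicand hq]
    field_simp
  have hS : 0 < Y * √(antiprismRadicand a t p q) / W := by positivity
  refine ((hasDerivAt_antiprismArgA X hG).arccos_of_one_sub_sq_eq hS h1).congr_deriv ?_
  rw [← hW_def]
  field_simp
  linear_combination -(X * (cosh t - p) * sinh t * (2 * cosh t ^ 2 - 1 - cosh a)) * hY2

end

theorem stmt_18_general (n : ℕ) (a : ℝ) (ha : 0 < a) :
    ∀ t : ℝ, 0 < t →
      1 + Real.cosh a - 2 * Real.cosh t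
        - 2 * (Real.cosh t - 1) * Real.cos (π / n) < 0 →
      HasDerivAt (fun s : ℝ => Real.arccos
          (-(Real.sqrt (Real.cosh a - 1)
              * (1 + Real.cosh a - 2 * Real.cosh s * Real.cos (π / n)))
            / Real.sqrt (2 * (2 * Real.cosh s ^ 2 - 1 - Real.cosh a)
              * (Real.cosh a - Real.cos (2 * π / n)))))
        (2 * (Real.cosh t - Real.cos (π / n)) * Real.sinh a * Real.sinh t
          / ((1 + Real.cosh a - 2 * Real.cosh t ^ 2)
            * Real.sqrt (1 - Real.cosh a * (2 + Real.cosh a) + 2 * Real.cosh t ^ 2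
              + 4 * (Real.cosh a - 1) * Real.cosh t * Real.cos (π / n)
              - 2 * Real.sinh t ^ 2 * Real.cos (2 * π / n)))) t ∧
      HasDerivAt (fun s : ℝ => Real.arccos
          ((Real.cosh s - Real.cosh a * Real.cosh s
              + 2 * (Real.cosh s ^ 2 - 1) * Real.cos (π / n))
            / (1 + Real.cosh a - 2 * Real.cosh s ^ 2)))
        (-((Real.cosh a - 1) * (1 + Real.cosh a + 2 * Real.cosh t ^ 2
              - 4 * Real.cosh t * Real.cos (π / n)))
          / ((1 + Real.cosh a - 2 * Real.cosh t ^ 2)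
            * Real.sqrt (1 - Real.cosh a * (2 + Real.cosh a) + 2 * Real.cosh t ^ 2
              + 4 * (Real.cosh a - 1) * Real.cosh t * Real.cos (π / n)
              - 2 * Real.sinh t ^ 2 * Real.cos (2 * π / n)))) t := by
  intro t ht hdom
  have hq : cos (2 * π / n) = 2 * cos (π / n) ^ 2 - 1 := by rw [mul_div_assoc, cos_two_mul]
  exact ⟨hasDerivAt_antiprismAngleA ha (abs_cos_le_one _) hq hdom,
    hasDerivAt_antiprismAngleC ha.ne' ht (cos_le_one _) hq hdom⟩

/-- Derivatives of the dihedral angles `A(t)`, `C(t)` of a compact hyperbolic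
antiprism with respect to the lateral edge length `t`. -/
theorem stmt_18 (n : ℕ) (hn : 2 ≤ n) (a : ℝ) (ha : 0 < a) :
    ∀ t : ℝ, 0 < t →
      1 + Real.cosh a - 2 * Real.cosh t
        - 2 * (Real.cosh t - 1) * Real.cos (π / n) < 0 →
      HasDerivAt (fun s : ℝ => Real.arccos
          (-(Real.sqrt (Real.cosh a - 1)
              * (1 + Real.cosh a - 2 * Real.cosh s * Real.cos (π / n)))
            / Real.sqrt (2 * (2 * Real.cosh s ^ 2 - 1 - Real.cosh a)
              * (Real.cosh a - Real.cos (2 * π / n)))))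
        (2 * (Real.cosh t - Real.cos (π / n)) * Real.sinh a * Real.sinh t
          / ((1 + Real.cosh a - 2 * Real.cosh t ^ 2)
            * Real.sqrt (1 - Real.cosh a * (2 + Real.cosh a) + 2 * Real.cosh t ^ 2
              + 4 * (Real.cosh a - 1) * Real.cosh t * Real.cos (π / n)
              - 2 * Real.sinh t ^ 2 * Real.cos (2 * π / n)))) t ∧
      HasDerivAt (fun s : ℝ => Real.arccos
          ((Real.cosh s - Real.cosh a * Real.cosh s
              + 2 * (Real.cosh s ^ 2 - 1) * Real.cos (π / n))
            / (1 + Real.cosh a - 2 * Real.cosh s ^ 2)))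
        (-((Real.cosh a - 1) * (1 + Real.cosh a + 2 * Real.cosh t ^ 2
              - 4 * Real.cosh t * Real.cos (π / n)))
          / ((1 + Real.cosh a - 2 * Real.cosh t ^ 2)
            * Real.sqrt (1 - Real.cosh a * (2 + Real.cosh a) + 2 * Real.cosh t ^ 2
              + 4 * (Real.cosh a - 1) * Real.cosh t * Real.cos (π / n)
              - 2 * Real.sinh t ^ 2 * Real.cos (2 * π / n)))) t :=
  stmt_18_general n a ha
end
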